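/- Assume (H1), (H3), (H4), that Π maps 𝔄(q) onto H⁻ for every q ∈ Q (so Φ : Q × H⁻ → H is well-defined), that Q is compact, and that Φ is continuous. If the semi-trajectory u(t) = ψ^t(q,u₀), t ≥ 0, has precompact image, then dist(u(t), 𝔄(ϑ^t(q))) → 0 as t → +∞, and moreover |u(t) − Φ(ϑ^t(q), Π u(t))| → 0 as t → +∞. -/

import Mathlib

open MeasureTheory Set Bornology Filter Topology RealInnerProductSpace

noncomputable section

variable {Q H : Type*}

section Defs
variable [MetricSpace Q] [NormedAddCommGroup H] [InnerProductSpace ℝ H] [CompleteSpace H]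

def IsFlow (ϑ : ℝ → Q → Q) : Prop :=
  (∀ q, ϑ 0 q = q) ∧ (∀ t s q, ϑ (t + s) q = ϑ t (ϑ s q)) ∧
    Continuous fun p : ℝ × Q => ϑ p.1 p.2

def IsCocycle (ϑ : ℝ → Q → Q) (ψ : ℝ → Q → H → H) : Prop :=
  (∀ q u, ψ 0 q u = u) ∧
  (∀ t s : ℝ, 0 ≤ t → 0 ≤ s → ∀ q u, ψ (t + s) q u = ψ t (ϑ s q) (ψ s q u)) ∧
  ContinuousOn (fun p : ℝ × Q × H => ψ p.1 p.2.1 p.2.2) {p : ℝ × Q × H | 0 ≤ p.1}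

def IsCompleteTraj (ϑ : ℝ → Q → Q) (ψ : ℝ → Q → H → H) (q : Q) (u : ℝ → H) : Prop :=
  Continuous u ∧ ∀ t s : ℝ, 0 ≤ t → u (t + s) = ψ t (ϑ s q) (u s)

def IsAmenable (ν : ℝ) (u : ℝ → H) : Prop :=
  IntegrableOn (fun s : ℝ => Real.exp (2 * ν * s) * ‖u s‖ ^ 2) (Set.Iic (0:ℝ))

def amenSet (ϑ : ℝ → Q → Q) (ψ : ℝ → Q → H → H) (ν : ℝ) (q : Q) : Set H :=
  {u₀ | ∃ u : ℝ → H, IsCompleteTraj ϑ ψ q u ∧ IsAmenable ν u ∧ u 0 = u₀}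

structure HypH1 (P : H →L[ℝ] H) (Hplus Hminus : Submodule ℝ H) : Prop where
  selfAdj : IsSelfAdjoint P
  closed_plus : IsClosed (Hplus : Set H)
  orth : Hminus = Hplusᗮ
  inv_plus : ∀ u ∈ Hplus, P u ∈ Hplus
  inv_minus : ∀ u ∈ Hminus, P u ∈ Hminus
  pos : ∀ u ∈ Hplus, u ≠ 0 → (0:ℝ) < ⟪P u, u⟫
  neg : ∀ u ∈ Hminus, u ≠ 0 → ⟪P u, u⟫ < 0

def HypH2 (Hminus : Submodule ℝ H) (j : ℕ) : Prop :=
  FiniteDimensional ℝ Hminus ∧ Module.finrank ℝ Hminus = j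

def HypH3 (ψ : ℝ → Q → H → H) (P : H →L[ℝ] H) (δ ν : ℝ) : Prop :=
  0 < δ ∧ 0 < ν ∧ ∀ (q : Q) (u v : H) (l r : ℝ), 0 ≤ l → l ≤ r →
    Real.exp (2 * ν * r) * ⟪P (ψ r q u - ψ r q v), ψ r q u - ψ r q v⟫ -
      Real.exp (2 * ν * l) * ⟪P (ψ l q u - ψ l q v), ψ l q u - ψ l q v⟫ ≤
      -δ * ∫ s in l..r, Real.exp (2 * ν * s) * ‖ψ s q u - ψ s q v‖ ^ 2

def IsOrthProjOnto (Hminus : Submodule ℝ H) (Pi : H →L[ℝ] H) : Prop :=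
  (∀ u, Pi u ∈ Hminus) ∧ ∀ u, u - Pi u ∈ Hminusᗮ

def HypCOM2 (ψ : ℝ → Q → H → H) : Prop :=
  ∃ tc : ℝ, 0 < tc ∧ ∀ (q : Q) (s : Set H), IsBounded s → IsCompact (closure (ψ tc q '' s))

def HypCOM3 (ψ : ℝ → Q → H → H) : Prop :=
  ∀ (q : Q) (u₀ : H), IsBounded ((fun t => ψ t q u₀) '' Set.Ici (0:ℝ)) →
    IsCompact (closure ((fun t => ψ t q u₀) '' Set.Ici (0:ℝ)))

def LyapunovStable (ψ : ℝ → Q → H → H) (q : Q) (v : ℝ → H) : Prop :=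
  ∀ ε > 0, ∃ η > 0, ∀ u₀ : H, ‖u₀ - v 0‖ < η → ∀ t ≥ 0, ‖ψ t q u₀ - v t‖ < ε

end Defs

def circleFlow (σ : ℝ) : ℝ → AddCircle σ → AddCircle σ := fun t θ => θ + (t : AddCircle σ)

/-!
Let `tₙ → ∞` (along an ultrafilter, which spares a diagonal extraction). Compactness of `Q` and
of the closure of the semi-trajectory gives limits `ϑ^{tₙ} q → q'` and `u(tₙ + s) → w(s)` for
every `s ∈ ℝ`; by the cocycle property `w` is a complete trajectory at `q'`, and being bounded it
is amenable, so `w(0) ∈ 𝔄(q')`. Two amenable trajectories `u, v` with `Π u(0) = Π v(0)` coincide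
at `0`: `u(0) - v(0) ∈ H⁺`, and (H3) bounds `0 < V(u(0) - v(0))` by a multiple of
`e^{2νs} |u(s) - v(s)|²` for all `s ≤ 0`, which is integrable on `(-∞, 0]`. Hence
`w(0) = Φ(q', Π w(0))`, and continuity of `Φ` gives `u(tₙ) - Φ(ϑ^{tₙ} q, Π u(tₙ)) → 0`.
-/

lemma IsCompact.exists_tendsto_of_ultrafilter {α X : Type*} [TopologicalSpace X] {K : Set X}
    (hK : IsCompact K) (U : Ultrafilter α) {f : α → X} (hf : ∀ᶠ a in U, f a ∈ K) :
    ∃ x ∈ K, Tendsto f U (𝓝 x) :=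
  hK.ultrafilter_le_nhds (U.map f) (le_principal_iff.2 hf)

lemma nonpos_of_forall_le_of_integrableOn_Iic {f : ℝ → ℝ} {a c : ℝ}
    (hf : IntegrableOn f (Iic a)) (hc : ∀ s ≤ a, c ≤ f s) : c ≤ 0 := by
  by_contra! hpos
  have hconst : IntegrableOn (fun _ : ℝ => c) (Iic a) := by
    refine hf.mono' aestronglyMeasurable_const ((ae_restrict_iff' measurableSet_Iic).2 ?_)
    filter_upwards with s hs
    rw [Real.norm_of_nonneg hpos.le]
    exact hc s hs
  rw [integrableOn_const_iff, Real.volume_Iic] at hconst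
  simp [hpos.ne'] at hconst

lemma real_inner_apply_self_le {H : Type*} [NormedAddCommGroup H] [InnerProductSpace ℝ H]
    (P : H →L[ℝ] H) (x : H) : ⟪P x, x⟫ ≤ ‖P‖ * ‖x‖ ^ 2 :=
  calc ⟪P x, x⟫ ≤ ‖P x‖ * ‖x‖ := real_inner_le_norm _ _
    _ ≤ ‖P‖ * ‖x‖ * ‖x‖ := by gcongr; exact P.le_opNorm x
    _ = ‖P‖ * ‖x‖ ^ 2 := by ring

section Amenable

variable {H : Type*} [NormedAddCommGroup H] {ν : ℝ} {u v : ℝ → H}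

lemma isAmenable_of_norm_le (hν : 0 < ν) (hu : Continuous u) {C : ℝ} (hC : ∀ s, ‖u s‖ ≤ C) :
    IsAmenable ν u := by
  refine ((integrableOn_exp_mul_Iic (a := 2 * ν) (by positivity) 0).mul_const (C ^ 2)).mono'
    (by fun_prop) (Eventually.of_forall fun s => ?_)
  rw [Real.norm_of_nonneg (by positivity)]
  exact mul_le_mul_of_nonneg_left (pow_le_pow_left₀ (norm_nonneg _) (hC s) 2) (by positivity)

lemma IsAmenable.sub (hu : IsAmenable ν u) (hv : IsAmenable ν v) (huc : Continuous u)
    (hvc : Continuous v) : IsAmenable ν (u - v) := by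
  refine ((hu.add hv).const_mul 2).mono' (by fun_prop) (Eventually.of_forall fun s => ?_)
  rw [Real.norm_of_nonneg (by positivity)]
  have hsq : ‖u s - v s‖ ^ 2 ≤ 2 * ‖u s‖ ^ 2 + 2 * ‖v s‖ ^ 2 := by
    nlinarith [norm_sub_le (u s) (v s), norm_nonneg (u s - v s), sq_nonneg (‖u s‖ - ‖v s‖)]
  calc Real.exp (2 * ν * s) * ‖(u - v) s‖ ^ 2
      ≤ Real.exp (2 * ν * s) * (2 * ‖u s‖ ^ 2 + 2 * ‖v s‖ ^ 2) := by gcongr; exact hsq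
    _ = _ := by simp only [Pi.add_apply]; ring

end Amenable

section Uniqueness

variable {Q H : Type*} [NormedAddCommGroup H] {ϑ : ℝ → Q → Q} {ψ : ℝ → Q → H → H} {q : Q}
  {u v : ℝ → H}

lemma IsCompleteTraj.eq_cocycle (hu : IsCompleteTraj ϑ ψ q u) {s t : ℝ} (hst : s ≤ t) :
    u t = ψ (t - s) (ϑ s q) (u s) := by
  simpa using hu.2 (t - s) s (sub_nonneg.2 hst)

variable [InnerProductSpace ℝ H] {P : H →L[ℝ] H} {δ ν : ℝ}

lemma HypH3.inner_sub_le (h3 : HypH3 ψ P δ ν) (hu : IsCompleteTraj ϑ ψ q u)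
    (hv : IsCompleteTraj ϑ ψ q v) {l : ℝ} (hl : l ≤ 0) :
    ⟪P (u 0 - v 0), u 0 - v 0⟫ ≤ Real.exp (2 * ν * l) * ⟪P (u l - v l), u l - v l⟫ := by
  have key := h3.2.2 (ϑ l q) (u l) (v l) 0 (-l) le_rfl (by linarith)
  have hu0 : ψ (-l) (ϑ l q) (u l) = u 0 := by simpa using (hu.eq_cocycle hl).symm
  have hv0 : ψ (-l) (ϑ l q) (v l) = v 0 := by simpa using (hv.eq_cocycle hl).symm
  have hul : ψ 0 (ϑ l q) (u l) = u l := by simpa using (hu.eq_cocycle le_rfl).symm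
  have hvl : ψ 0 (ϑ l q) (v l) = v l := by simpa using (hv.eq_cocycle le_rfl).symm
  have hint : 0 ≤ ∫ s in (0 : ℝ)..-l,
      Real.exp (2 * ν * s) * ‖ψ s (ϑ l q) (u l) - ψ s (ϑ l q) (v l)‖ ^ 2 :=
    intervalIntegral.integral_nonneg (by linarith) fun _ _ => by positivity
  rw [hu0, hv0, hul, hvl, mul_zero, Real.exp_zero, one_mul] at key
  have hdecay :
      Real.exp (2 * ν * -l) * ⟪P (u 0 - v 0), u 0 - v 0⟫ ≤ ⟪P (u l - v l), u l - v l⟫ := by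
    nlinarith [h3.1]
  calc ⟪P (u 0 - v 0), u 0 - v 0⟫
      = Real.exp (2 * ν * l) * (Real.exp (2 * ν * -l) * ⟪P (u 0 - v 0), u 0 - v 0⟫) := by
        rw [← mul_assoc, ← Real.exp_add]; simp
    _ ≤ Real.exp (2 * ν * l) * ⟪P (u l - v l), u l - v l⟫ := by gcongr

lemma HypH3.inner_sub_nonpos (h3 : HypH3 ψ P δ ν) (hu : IsCompleteTraj ϑ ψ q u)
    (hau : IsAmenable ν u) (hv : IsCompleteTraj ϑ ψ q v) (hav : IsAmenable ν v) :
    ⟪P (u 0 - v 0), u 0 - v 0⟫ ≤ 0 := by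
  refine nonpos_of_forall_le_of_integrableOn_Iic
    ((hau.sub hav hu.1 hv.1).const_mul ‖P‖) fun l hl => ?_
  calc ⟪P (u 0 - v 0), u 0 - v 0⟫
      ≤ Real.exp (2 * ν * l) * ⟪P (u l - v l), u l - v l⟫ := h3.inner_sub_le hu hv hl
    _ ≤ Real.exp (2 * ν * l) * (‖P‖ * ‖u l - v l‖ ^ 2) := by
      gcongr; exact real_inner_apply_self_le P _
    _ = ‖P‖ * (Real.exp (2 * ν * l) * ‖(u - v) l‖ ^ 2) := by simp only [Pi.sub_apply]; ring

variable [CompleteSpace H] {Hplus Hminus : Submodule ℝ H} {Pi : H →L[ℝ] H}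

lemma HypH1.sub_mem_of_proj_eq (h1 : HypH1 P Hplus Hminus) (hPi : IsOrthProjOnto Hminus Pi)
    {x y : H} (hxy : Pi x = Pi y) : x - y ∈ Hplus := by
  have : CompleteSpace Hplus := h1.closed_plus.completeSpace_coe
  simpa [h1.orth, hxy] using hPi.2 (x - y)

lemma injOn_amenSet (h1 : HypH1 P Hplus Hminus) (h3 : HypH3 ψ P δ ν)
    (hPi : IsOrthProjOnto Hminus Pi) (q : Q) : InjOn Pi (amenSet ϑ ψ ν q) := by
  rintro _ ⟨u, hu, hau, rfl⟩ _ ⟨v, hv, hav, rfl⟩ hPiuv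
  by_contra hne
  exact (h3.inner_sub_nonpos hu hau hv hav).not_gt
    (h1.pos _ (h1.sub_mem_of_proj_eq hPi hPiuv) (sub_ne_zero.2 hne))

end Uniqueness

section Trajectories

variable {Q H : Type*} [MetricSpace Q] [NormedAddCommGroup H]
  {ϑ : ℝ → Q → Q} {ψ : ℝ → Q → H → H} {q : Q} {u : ℝ → H}

lemma IsFlow.continuous_apply (hflow : IsFlow ϑ) (t : ℝ) : Continuous (ϑ t) :=
  hflow.2.2.comp (continuous_const.prodMk continuous_id)

lemma IsCocycle.continuous_apply (hcoc : IsCocycle ϑ ψ) {t : ℝ} (ht : 0 ≤ t) :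
    Continuous fun p : Q × H => ψ t p.1 p.2 :=
  continuousOn_univ.1 <| hcoc.2.2.comp (continuous_const.prodMk continuous_id).continuousOn
    fun _ _ => ht

lemma continuous_of_cocycle_eq (hcoc : IsCocycle ϑ ψ)
    (hu : ∀ t s : ℝ, 0 ≤ t → u (t + s) = ψ t (ϑ s q) (u s)) : Continuous u := by
  refine continuous_iff_continuousAt.2 fun x => ?_
  have hright :
      ContinuousOn (fun t => ψ (t - (x - 1)) (ϑ (x - 1) q) (u (x - 1))) (Ici (x - 1)) :=
    hcoc.2.2.comp (Continuous.continuousOn (by fun_prop :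
      Continuous fun t : ℝ => (t - (x - 1), ϑ (x - 1) q, u (x - 1))))
      fun t ht => sub_nonneg.2 (mem_Ici.1 ht)
  refine ((hright.congr fun t ht => ?_).continuousAt (Ici_mem_nhds (by linarith)))
  simpa using hu (t - (x - 1)) (x - 1) (sub_nonneg.2 (mem_Ici.1 ht))

lemma isCompleteTraj_of_tendsto (hflow : IsFlow ϑ) (hcoc : IsCocycle ϑ ψ) {l : Filter ℝ}
    [l.NeBot] (hl : l ≤ atTop) {q q' : Q} {u₀ : H} {w : ℝ → H}
    (hq : Tendsto (fun τ => ϑ τ q) l (𝓝 q'))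
    (hw : ∀ s, Tendsto (fun τ => ψ (τ + s) q u₀) l (𝓝 (w s))) :
    IsCompleteTraj ϑ ψ q' w := by
  have hcoc_eq : ∀ t s : ℝ, 0 ≤ t → w (t + s) = ψ t (ϑ s q') (w s) := by
    intro t s ht
    have hshift : (fun τ => ψ (τ + (t + s)) q u₀) =ᶠ[l]
        fun τ => ψ t (ϑ s (ϑ τ q)) (ψ (τ + s) q u₀) := by
      filter_upwards [(eventually_ge_atTop (-s)).filter_mono hl] with τ hτ
      rw [show τ + (t + s) = t + (τ + s) by ring, hcoc.2.1 t _ ht (by linarith),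
        add_comm τ, hflow.2.1]
    exact tendsto_nhds_unique ((hw (t + s)).congr' hshift)
      (((hcoc.continuous_apply ht).tendsto _).comp
        ((((hflow.continuous_apply s).tendsto q').comp hq).prodMk_nhds (hw s)))
  exact ⟨continuous_of_cocycle_eq hcoc hcoc_eq, hcoc_eq⟩

lemma exists_isCompleteTraj_limit [CompactSpace Q] (hflow : IsFlow ϑ) (hcoc : IsCocycle ϑ ψ)
    {u₀ : H} (hK : IsCompact (closure ((fun t => ψ t q u₀) '' Ici 0)))
    (U : Ultrafilter ℝ) (hU : (U : Filter ℝ) ≤ atTop) :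
    ∃ q' w, Tendsto (fun τ => ϑ τ q) U (𝓝 q') ∧
      (∀ s, Tendsto (fun τ => ψ (τ + s) q u₀) U (𝓝 (w s))) ∧
      (∀ s, w s ∈ closure ((fun t => ψ t q u₀) '' Ici 0)) ∧ IsCompleteTraj ϑ ψ q' w := by
  obtain ⟨q', -, hq⟩ := isCompact_univ.exists_tendsto_of_ultrafilter U
    (f := fun τ => ϑ τ q) (Eventually.of_forall fun _ => mem_univ _)
  have hlim : ∀ s, ∃ x ∈ closure ((fun t => ψ t q u₀) '' Ici 0),
      Tendsto (fun τ => ψ (τ + s) q u₀) U (𝓝 x) := fun s =>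
    hK.exists_tendsto_of_ultrafilter U <| ((eventually_ge_atTop (-s)).filter_mono hU).mono
      fun τ hτ => subset_closure ⟨τ + s, mem_Ici.2 (by linarith), rfl⟩
  choose w hwK hw using hlim
  exact ⟨q', w, hq, hw, hwK, isCompleteTraj_of_tendsto (l := ↑U) hflow hcoc hU hq hw⟩

end Trajectories

theorem amenable_sets_attract_general
    {Q H : Type*} [MetricSpace Q] [CompactSpace Q]
    [NormedAddCommGroup H] [InnerProductSpace ℝ H]
    [CompleteSpace H]
    (ϑ : ℝ → Q → Q) (ψ : ℝ → Q → H → H)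
    (hflow : IsFlow ϑ) (hcoc : IsCocycle ϑ ψ)
    (P : H →L[ℝ] H) (Hplus Hminus : Submodule ℝ H)
    (h1 : HypH1 P Hplus Hminus)
    (δ ν : ℝ) (h3 : HypH3 ψ P δ ν)
    (Pi : H →L[ℝ] H) (hPi : IsOrthProjOnto Hminus Pi)
    (Φ : Q → ↥Hminus → H)
    (hΦmem : ∀ (q : Q) (ζ : ↥Hminus), Φ q ζ ∈ amenSet ϑ ψ ν q)
    (hΦproj : ∀ (q : Q) (ζ : ↥Hminus), Pi (Φ q ζ) = (ζ : H))
    (hΦcont : Continuous fun p : Q × ↥Hminus => Φ p.1 p.2)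
    (q : Q) (u₀ : H)
    (hprecompact : IsCompact (closure ((fun t => ψ t q u₀) '' Set.Ici (0:ℝ)))) :
    Tendsto (fun t : ℝ => Metric.infDist (ψ t q u₀) (amenSet ϑ ψ ν (ϑ t q)))
        atTop (𝓝 0) ∧
    Tendsto (fun t : ℝ => ‖ψ t q u₀ - Φ (ϑ t q) ⟨Pi (ψ t q u₀), hPi.1 _⟩‖)
        atTop (𝓝 0) := by
  have hgap : Tendsto (fun t : ℝ => ‖ψ t q u₀ - Φ (ϑ t q) ⟨Pi (ψ t q u₀), hPi.1 _⟩‖)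
      atTop (𝓝 0) := by
    refine (tendsto_iff_ultrafilter _ _ _).2 fun U hU => ?_
    obtain ⟨q', w, hq, hw, hwK, hwtraj⟩ :=
      exists_isCompleteTraj_limit hflow hcoc hprecompact U hU
    obtain ⟨C, hC⟩ := isBounded_iff_forall_norm_le.1 hprecompact.isBounded
    have hw0 : w 0 ∈ amenSet ϑ ψ ν q' :=
      ⟨w, hwtraj, isAmenable_of_norm_le h3.2.1 hwtraj.1 fun s => hC _ (hwK s), rfl⟩
    have hΦw : Φ q' ⟨Pi (w 0), hPi.1 _⟩ = w 0 :=
      injOn_amenSet h1 h3 hPi q' (hΦmem _ _) hw0 (hΦproj _ _)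
    have hu : Tendsto (fun t => ψ t q u₀) U (𝓝 (w 0)) := by simpa using hw 0
    have hΦu : Tendsto (fun t => Φ (ϑ t q) ⟨Pi (ψ t q u₀), hPi.1 _⟩) U (𝓝 (w 0)) :=
      hΦw ▸ (hΦcont.tendsto _).comp
        (hq.prodMk_nhds (tendsto_subtype_rng.2 ((Pi.continuous.tendsto _).comp hu)))
    simpa using (hu.sub hΦu).norm
  refine ⟨squeeze_zero (fun _ => Metric.infDist_nonneg) (fun t => ?_) hgap, hgap⟩
  exact (Metric.infDist_le_dist_of_mem (hΦmem _ _)).trans_eq (dist_eq_norm _ _)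

/-- Proposition 4: under (H1), (H3), (H4), with `Π` mapping each amenable set onto `H⁻`,
`Q` compact and `Φ` continuous, every precompact semi-trajectory is attracted by the
family of amenable sets: `dist(u(t), 𝔄(ϑ^t q)) → 0` and
`‖u(t) − Φ(ϑ^t q, Π u(t))‖ → 0` as `t → +∞`. -/
theorem amenable_sets_attract
    {Q H : Type*} [MetricSpace Q] [CompactSpace Q]
    [NormedAddCommGroup H] [InnerProductSpace ℝ H]
    [CompleteSpace H] [TopologicalSpace.SeparableSpace H]
    (ϑ : ℝ → Q → Q) (ψ : ℝ → Q → H → H)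
    (hflow : IsFlow ϑ) (hcoc : IsCocycle ϑ ψ)
    (P : H →L[ℝ] H) (Hplus Hminus : Submodule ℝ H)
    (h1 : HypH1 P Hplus Hminus)
    (δ ν : ℝ) (h3 : HypH3 ψ P δ ν)
    (h4 : ∀ q : Q, (amenSet ϑ ψ ν q).Nonempty)
    (Pi : H →L[ℝ] H) (hPi : IsOrthProjOnto Hminus Pi)
    (honto : ∀ q : Q, Pi '' (amenSet ϑ ψ ν q) = (Hminus : Set H))
    (Φ : Q → ↥Hminus → H)
    (hΦmem : ∀ (q : Q) (ζ : ↥Hminus), Φ q ζ ∈ amenSet ϑ ψ ν q)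
    (hΦproj : ∀ (q : Q) (ζ : ↥Hminus), Pi (Φ q ζ) = (ζ : H))
    (hΦcont : Continuous fun p : Q × ↥Hminus => Φ p.1 p.2)
    (q : Q) (u₀ : H)
    (hprecompact : IsCompact (closure ((fun t => ψ t q u₀) '' Set.Ici (0:ℝ)))) :
    Tendsto (fun t : ℝ => Metric.infDist (ψ t q u₀) (amenSet ϑ ψ ν (ϑ t q)))
        atTop (𝓝 0) ∧
    Tendsto (fun t : ℝ => ‖ψ t q u₀ - Φ (ϑ t q) ⟨Pi (ψ t q u₀), hPi.1 _⟩‖)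
        atTop (𝓝 0) :=
  amenable_sets_attract_general ϑ ψ hflow hcoc P Hplus Hminus h1 δ ν h3 Pi hPi Φ hΦmem hΦproj hΦcont
    q u₀ hprecompact
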